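/- arXiv:2509.16537 — 3 statements merged into one kernel-verified Lean document; each statement's English description precedes it below -/
import Mathlib

section
/- Let θ̂ ∈ Θ and r ≥ 0 satisfy r ≤ θ̂_j for every j = 1,…,n, and let φ_1,…,φ_n ∈ ℝ. Then max{ ∑_{j=1}^n θ_j φ_j : θ ∈ Θ, ‖θ − θ̂‖_∞ ≤ r } = ∑_{j=1}^n (θ̂_j − r) φ_j + (n r) · inf_{d ∈ ℝ} ( d + (2/n) ∑_{j=1}^n max(φ_j − d, 0) ). In other words, writing θ^l_j := θ̂_j − r, the worst-case value equals ∑_j θ^l_j φ_j + (1 − ∑_j θ^l_j)·CVaR at confidence level 0.5 of the values φ_1,…,φ_n under the uniform distribution on {1,…,n}, where CVaR^{0.5} of a discrete random variable Z under P is inf_{d∈ℝ} ( d + 2 E_P[max(Z − d, 0)] ). -/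
open Set Filter MeasureTheory
open scoped ENNReal

noncomputable section

/-- The probability simplex Θ in ℝⁿ. -/
def simplex (n : ℕ) : Set (Fin n → ℝ) := {θ | ∑ j, θ j = 1 ∧ ∀ j, 0 ≤ θ j}

/-- Ambiguity set `𝔹∞(c, r) ∩ Θ`.  (The norm on `Fin n → ℝ` is the sup norm.) -/
def amb {n : ℕ} (c : Fin n → ℝ) (r : ℝ) : Set (Fin n → ℝ) :=
  {θ | ‖θ - c‖ ≤ r} ∩ simplex n

/-- Regularized lower-level objective `∑_j θ_j h_j(x) − λ‖θ‖²` (Euclidean norm squared). -/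
def obj {n d : ℕ} (h : Fin n → (Fin d → ℝ) → ℝ) (lam : ℝ) (x : Fin d → ℝ)
    (θ : Fin n → ℝ) : ℝ :=
  (∑ j, θ j * h j x) - lam * ∑ j, (θ j) ^ 2

/-- Optimal value `ν^λ(x, c, r)` of the regularized lower-level problem. -/
def nuval {n d : ℕ} (h : Fin n → (Fin d → ℝ) → ℝ) (lam : ℝ) (x : Fin d → ℝ)
    (c : Fin n → ℝ) (r : ℝ) : ℝ :=
  sSup (obj h lam x '' amb c r)

/-- Maximizer set `ϑ^λ(x, c, r)` of the regularized lower-level problem. -/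
def argmaxSet {n d : ℕ} (h : Fin n → (Fin d → ℝ) → ℝ) (lam : ℝ) (x : Fin d → ℝ)
    (c : Fin n → ℝ) (r : ℝ) : Set (Fin n → ℝ) :=
  {θ ∈ amb c r | obj h lam x θ = nuval h lam x c r}

/-- Normal cone of `X` at `x` (standard inner product on ℝ^d). -/
def normalCone {d : ℕ} (X : Set (Fin d → ℝ)) (x : Fin d → ℝ) : Set (Fin d → ℝ) :=
  {v | ∀ y ∈ X, ∑ i, v i * (y i - x i) ≤ 0}

/-- x-solution set `𝔛^λ(c, r)` of the (regularized) Bayesian DRVI. -/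
def solSet {n d : ℕ} (G : Fin n → (Fin d → ℝ) → Fin d → ℝ)
    (h : Fin n → (Fin d → ℝ) → ℝ) (lam : ℝ) (X : Set (Fin d → ℝ))
    (c : Fin n → ℝ) (r : ℝ) : Set (Fin d → ℝ) :=
  {x ∈ X | ∃ θ ∈ argmaxSet h lam x c r,
      ∀ y ∈ X, 0 ≤ ∑ i, (∑ j, θ j * G j x i) * (y i - x i)}

/-- One-sided deviation `𝔻(S, T)` (the metric of the Pi type is the sup metric). -/
def dev {α : Type*} [PseudoMetricSpace α] (S T : Set α) : ℝ :=
  sSup ((fun s => Metric.infDist s T) '' S)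

/-- One-sided deviation with values in `ℝ≥0∞`. -/
def devE {α : Type*} [PseudoMetricSpace α] (S T : Set α) : ℝ≥0∞ :=
  ⨆ s ∈ S, ENNReal.ofReal (Metric.infDist s T)

/-- Lower-level growth function `ψ_x^λ` at parameters `(c, r)`
(values in `[0,∞]`; the infimum over the empty set is `⊤`). -/
def psiLow {n d : ℕ} (h : Fin n → (Fin d → ℝ) → ℝ) (lam : ℝ) (x : Fin d → ℝ)
    (c : Fin n → ℝ) (r : ℝ) (τ : ℝ) : ℝ≥0∞ :=
  ⨅ θ ∈ {θ ∈ amb c r | τ ≤ Metric.infDist θ (argmaxSet h lam x c r)},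
    ENNReal.ofReal (nuval h lam x c r - obj h lam x θ)

/-- Generalized inverse `(ψ_x^λ)⁻¹(t) = sup{τ ≥ 0 : ψ_x^λ(τ) ≤ t}`. -/
def psiLowInv {n d : ℕ} (h : Fin n → (Fin d → ℝ) → ℝ) (lam : ℝ) (x : Fin d → ℝ)
    (c : Fin n → ℝ) (r : ℝ) (t : ℝ) : ℝ≥0∞ :=
  ⨆ τ ∈ {τ : ℝ | 0 ≤ τ ∧ psiLow h lam x c r τ ≤ ENNReal.ofReal t}, ENNReal.ofReal τ

/-- `Ψ_x^λ(η) = η + (ψ_x^λ)⁻¹(2η)`. -/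
def PsiLow {n d : ℕ} (h : Fin n → (Fin d → ℝ) → ℝ) (lam : ℝ) (x : Fin d → ℝ)
    (c : Fin n → ℝ) (r : ℝ) (η : ℝ) : ℝ≥0∞ :=
  ENNReal.ofReal η + psiLowInv h lam x c r (2 * η)

/-- Residual `d(0, ∑_j θ_j G_j(x) + N_X(x))` (ℓ∞ distance). -/
def resid {n d : ℕ} (G : Fin n → (Fin d → ℝ) → Fin d → ℝ) (X : Set (Fin d → ℝ))
    (x : Fin d → ℝ) (θ : Fin n → ℝ) : ℝ :=
  Metric.infDist (0 : Fin d → ℝ)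
    ((fun w => (fun i => ∑ j, θ j * G j x i) + w) '' normalCone X x)

/-- Solution-set growth function `ψ^λ_{c,r}` (values in `[0,∞]`). -/
def psiSol {n d : ℕ} (G : Fin n → (Fin d → ℝ) → Fin d → ℝ)
    (h : Fin n → (Fin d → ℝ) → ℝ) (lam : ℝ) (X : Set (Fin d → ℝ))
    (c : Fin n → ℝ) (r : ℝ) (τ : ℝ) : ℝ≥0∞ :=
  ⨅ x ∈ {x ∈ X | τ ≤ Metric.infDist x (solSet G h lam X c r)},
    ⨅ θ ∈ argmaxSet h lam x c r, ENNReal.ofReal (resid G X x θ)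

/-- Generalized inverse `(ψ^λ_{c,r})⁻¹(t) = sup{τ ≥ 0 : ψ^λ_{c,r}(τ) ≤ t}`. -/
def psiSolInv {n d : ℕ} (G : Fin n → (Fin d → ℝ) → Fin d → ℝ)
    (h : Fin n → (Fin d → ℝ) → ℝ) (lam : ℝ) (X : Set (Fin d → ℝ))
    (c : Fin n → ℝ) (r : ℝ) (t : ℝ) : ℝ≥0∞ :=
  ⨆ τ ∈ {τ : ℝ | 0 ≤ τ ∧ psiSol G h lam X c r τ ≤ ENNReal.ofReal t}, ENNReal.ofReal τ
open Finset

/-! The sup is a linear program: after the shift `u = θ - θ̂ + r` the feasible set is the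
capped simplex `{0 ≤ u ≤ 2r, ∑ u = n r}`, whose LP dual is the CVaR-type minimisation over the
threshold `d`. Weak duality is the termwise bound `u (φ - d) ≤ 2r (φ - d)⁺`; strong duality comes
from a quantile `d` of the values `φ_j`: put full weight on the values above `d`, spread the
remaining mass over the values equal to `d`, and complementary slackness holds term by term. -/

section CappedSimplex

variable {ι : Type*} [Fintype ι]

def cappedSimplex (K m : ℝ) : Set (ι → ℝ) :=
  {w | (∀ j, 0 ≤ w j ∧ w j ≤ K) ∧ ∑ j, w j = m}

theorem smul_mem_cappedSimplex {c K m : ℝ} (hc : 0 ≤ c) {w : ι → ℝ}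
    (hw : w ∈ cappedSimplex K m) : c • w ∈ cappedSimplex (c * K) (c * m) := by
  obtain ⟨hbox, hsum⟩ := hw
  refine ⟨fun j => ⟨mul_nonneg hc (hbox j).1, mul_le_mul_of_nonneg_left (hbox j).2 hc⟩, ?_⟩
  simp [← mul_sum, hsum]

theorem sum_mul_le_of_mem_cappedSimplex {K m : ℝ} {w : ι → ℝ} (hw : w ∈ cappedSimplex K m)
    (φ : ι → ℝ) (d : ℝ) : ∑ j, w j * φ j ≤ m * d + K * ∑ j, max (φ j - d) 0 := by
  obtain ⟨hbox, hsum⟩ := hw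
  have hterm : ∀ j, w j * φ j ≤ w j * d + K * max (φ j - d) 0 := fun j => by
    have h₁ : w j * (φ j - d) ≤ w j * max (φ j - d) 0 :=
      mul_le_mul_of_nonneg_left (le_max_left _ _) (hbox j).1
    have h₂ : w j * max (φ j - d) 0 ≤ K * max (φ j - d) 0 :=
      mul_le_mul_of_nonneg_right (hbox j).2 (le_max_right _ _)
    linarith
  calc ∑ j, w j * φ j ≤ ∑ j, (w j * d + K * max (φ j - d) 0) := sum_le_sum fun j _ => hterm j
    _ = m * d + K * ∑ j, max (φ j - d) 0 := by rw [sum_add_distrib, ← sum_mul, ← mul_sum, hsum]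

theorem exists_card_lt_le_le_card_le [Nonempty ι] (φ : ι → ℝ) {a : ℝ} (ha₀ : 0 ≤ a)
    (ha : a ≤ Fintype.card ι) : ∃ t, (#{j | t < φ j} : ℝ) ≤ a ∧ a ≤ #{j | t ≤ φ j} := by
  classical
  set T : Finset ℝ := (Finset.univ.image φ).filter fun t => (#{j | t < φ j} : ℝ) ≤ a
  have hT : T.Nonempty := by
    obtain ⟨j, -, hj⟩ := exists_max_image univ φ univ_nonempty
    have : #{i | φ j < φ i} = 0 := by
      simpa [filter_eq_empty_iff] using fun i => hj i (Finset.mem_univ i)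
    exact ⟨φ j, mem_filter.2 ⟨mem_image_of_mem φ (Finset.mem_univ j), by simpa [this] using ha₀⟩⟩
  refine ⟨T.min' hT, (mem_filter.1 (T.min'_mem hT)).2, ?_⟩
  set t₀ := T.min' hT
  by_contra! hlt
  have hbelow : ({j | φ j < t₀} : Finset ι).Nonempty := by
    by_contra hempty
    rw [Finset.not_nonempty_iff_eq_empty, filter_eq_empty_iff] at hempty
    rw [filter_true_of_mem fun j _ => not_lt.1 (hempty (Finset.mem_univ j)), card_univ] at hlt
    linarith
  -- the largest value below `t₀` would also belong to `T`
  obtain ⟨j₁, hj₁, hmax⟩ := exists_max_image _ φ hbelow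
  have hj₁ : φ j₁ < t₀ := (mem_filter.1 hj₁).2
  have heq : ({j | φ j₁ < φ j} : Finset ι) = ({j | t₀ ≤ φ j} : Finset ι) := by
    ext j
    simp only [mem_filter, Finset.mem_univ, true_and]
    refine ⟨fun h => ?_, fun h => hj₁.trans_le h⟩
    by_contra! h'
    exact (hmax j (mem_filter.2 ⟨Finset.mem_univ j, h'⟩)).not_gt h
  have hmem : φ j₁ ∈ T :=
    mem_filter.2 ⟨mem_image_of_mem φ (Finset.mem_univ j₁), by rw [heq]; exact hlt.le⟩
  exact (T.min'_le _ hmem).not_gt hj₁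

theorem card_le_eq_card_lt_add_card_eq [DecidableEq ι] (φ : ι → ℝ) (t : ℝ) :
    #{j | t ≤ φ j} = #{j | t < φ j} + #{j | t = φ j} := by
  rw [← card_union_of_disjoint (disjoint_filter.2 fun j _ h => h.ne), ← filter_or]
  simp_rw [le_iff_lt_or_eq]

theorem exists_mem_cappedSimplex_sum_mul_eq [Nonempty ι] (φ : ι → ℝ) {K m : ℝ} (hK : 0 < K)
    (hm₀ : 0 ≤ m) (hm : m ≤ K * Fintype.card ι) :
    ∃ w ∈ cappedSimplex K m, ∃ d, ∑ j, w j * φ j = m * d + K * ∑ j, max (φ j - d) 0 := by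
  classical
  obtain ⟨t, hgt, hge⟩ :=
    exists_card_lt_le_le_card_le φ (div_nonneg hm₀ hK.le) ((div_le_iff₀' hK).2 hm)
  rw [card_le_eq_card_lt_add_card_eq, Nat.cast_add, div_le_iff₀' hK] at hge
  rw [le_div_iff₀' hK] at hgt
  set p : ℝ := ((#{j | t < φ j} : ℕ) : ℝ)
  set e : ℝ := ((#{j | t = φ j} : ℕ) : ℝ)
  have he₀ : 0 ≤ e := Nat.cast_nonneg _
  set q := (m - K * p) / e
  have hq₀ : 0 ≤ q := div_nonneg (by linarith) he₀
  have hqK : q ≤ K := div_le_of_le_mul₀ he₀ hK.le (by linarith)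
  have hqe : q * e = m - K * p := by
    rcases eq_or_ne e 0 with he | he
    · rw [he] at hge ⊢; linarith
    · exact div_mul_cancel₀ _ he
  set w : ι → ℝ := fun j => (if t < φ j then K else 0) + if t = φ j then q else 0
  have hbox : ∀ j, 0 ≤ w j ∧ w j ≤ K := fun j => by
    simp only [w]; split_ifs with h₁ h₂ <;> first | exact absurd h₂ h₁.ne | constructor <;> linarith
  have hsum : ∑ j, w j = m := by
    simp only [w, sum_add_distrib, sum_ite, sum_const_zero, sum_const, nsmul_eq_mul]
    linarith
  have hslack : ∀ j, w j * φ j = w j * t + K * max (φ j - t) 0 := fun j => by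
    simp only [w]
    split_ifs with h₁ h₂ h₂
    · exact absurd h₂ h₁.ne
    · rw [max_eq_left (by linarith)]; ring
    · rw [max_eq_right (by linarith), ← h₂]; ring
    · rw [max_eq_right (by linarith [lt_of_le_of_ne (not_lt.1 h₁) (Ne.symm h₂)])]; ring
  refine ⟨w, ⟨hbox, hsum⟩, t, ?_⟩
  rw [sum_congr rfl fun j _ => hslack j, sum_add_distrib, ← sum_mul, ← mul_sum, hsum]

end CappedSimplex

theorem mem_amb_iff {n : ℕ} {θhat : Fin n → ℝ} (hθhat : ∑ j, θhat j = 1) {r : ℝ} (hr : 0 ≤ r)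
    {θ : Fin n → ℝ} :
    θ ∈ amb θhat r ↔
      (∀ j, 0 ≤ θ j) ∧ (fun j => θ j - θhat j + r) ∈ cappedSimplex (2 * r) (n * r) := by
  have hsum : ∑ j, (θ j - θhat j + r) = ∑ j, θ j - 1 + n * r := by
    simp [sum_add_distrib, sum_sub_distrib, hθhat]
  simp only [amb, simplex, cappedSimplex, mem_inter_iff, mem_ofPred_eq,
    pi_norm_le_iff_of_nonneg hr, Pi.sub_apply, Real.norm_eq_abs, abs_le, hsum]
  constructor
  · rintro ⟨hbox, hone, hnn⟩
    exact ⟨hnn, fun j => ⟨by linarith [hbox j], by linarith [hbox j]⟩, by linarith⟩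
  · rintro ⟨hnn, hbox, hs⟩
    exact ⟨fun j => ⟨by linarith [hbox j], by linarith [hbox j]⟩, by linarith, hnn⟩

theorem affine_mem_amb {n : ℕ} {θhat : Fin n → ℝ} (hθhat : θhat ∈ simplex n) {r : ℝ} (hr : 0 ≤ r)
    (hrθ : ∀ j, r ≤ θhat j) {w : Fin n → ℝ} (hw : w ∈ cappedSimplex 2 n) :
    (fun j => θhat j - r + r * w j) ∈ amb θhat r := by
  refine (mem_amb_iff hθhat.1 hr).2 ⟨fun j => by nlinarith [hrθ j, (hw.1 j).1], ?_⟩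
  have hrw := smul_mem_cappedSimplex hr hw
  rw [mul_comm r 2, mul_comm r] at hrw
  convert hrw using 1
  ext j
  simp only [Pi.smul_apply, smul_eq_mul]
  ring

/-- Theorem 3.2: CVaR reformulation of the worst-case lower-level objective. -/
theorem cvar_reformulation {n : ℕ} (hn : 1 ≤ n)
    (θhat : Fin n → ℝ) (hθhat : θhat ∈ simplex n)
    (r : ℝ) (hr : 0 ≤ r) (hrθ : ∀ j, r ≤ θhat j) (φ : Fin n → ℝ) :
    sSup ((fun θ => ∑ j, θ j * φ j) '' amb θhat r)
      = (∑ j, (θhat j - r) * φ j)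
        + ((n : ℝ) * r) * ⨅ dd : ℝ, (dd + (2 / (n : ℝ)) * ∑ j, max (φ j - dd) 0) := by
  have : Nonempty (Fin n) := ⟨⟨0, hn⟩⟩
  have hn₀ : (0 : ℝ) < n := by exact_mod_cast hn
  set f : ℝ → ℝ := fun dd => dd + (2 / (n : ℝ)) * ∑ j, max (φ j - dd) 0
  have hf : ∀ dd, n * f dd = n * dd + 2 * ∑ j, max (φ j - dd) 0 := fun dd => by
    simp only [f]; field_simp
  clear_value f
  obtain ⟨w, hw, d, hwd⟩ :=
    exists_mem_cappedSimplex_sum_mul_eq φ two_pos n.cast_nonneg (by simp; linarith)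
  have hmin : ∀ dd, f d ≤ f dd := fun dd => le_of_mul_le_mul_left
    (by rw [hf, hf, ← hwd]; exact sum_mul_le_of_mem_cappedSimplex hw φ dd) hn₀
  have hinf : ⨅ dd, f dd = f d :=
    le_antisymm (ciInf_le ⟨f d, forall_mem_range.2 hmin⟩ d) (le_ciInf hmin)
  have hsplit : ∀ θ : Fin n → ℝ, ∑ j, θ j * φ j
      = ∑ j, (θhat j - r) * φ j + ∑ j, (θ j - θhat j + r) * φ j := fun θ => by
    rw [← sum_add_distrib]; exact sum_congr rfl fun j _ => by ring
  rw [hinf]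
  refine IsGreatest.csSup_eq ⟨⟨_, affine_mem_amb hθhat hr hrθ hw, ?_⟩, ?_⟩
  · have hval : ∑ j, (θhat j - r + r * w j - θhat j + r) * φ j = r * ∑ j, w j * φ j := by
      rw [mul_sum]; exact sum_congr rfl fun j _ => by ring
    dsimp only
    rw [hsplit, hval, hwd]
    linear_combination -r * hf d
  · rintro _ ⟨θ, hθ, rfl⟩
    have hweak := sum_mul_le_of_mem_cappedSimplex ((mem_amb_iff hθhat.1 hr).1 hθ).2 φ d
    dsimp only
    rw [hsplit θ]
    linear_combination hweak - r * hf d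
end
end

section
/- Suppose each h_j is Lipschitz continuous on 𝒳 with modulus L_j > 0 and |h_j(x)| ≤ M for all x ∈ 𝒳 and j = 1,…,n. Then for all x, y ∈ 𝒳, θ̂, θ̃ ∈ Θ and r̂, r̃ ∈ [0,1], |ν(x, θ̂, r̂) − ν(y, θ̃, r̃)| ≤ (max_{1≤j≤n} L_j)·‖x − y‖ + n M (‖θ̂ − θ̃‖_∞ + |r̂ − r̃|). In particular, the optimal value function ν is Lipschitz continuous on 𝒳 × Θ × [0,1]. -/
open Set Filter MeasureTheory
open scoped ENNReal

noncomputable section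

/-!
A weight vector `θ` feasible for `(θ̂, r̂)` lies within `r̂ + ‖θ̂ - θ̃‖∞` of `θ̃`, so moving it
towards `θ̃` inside the (convex) simplex by at most `‖θ̂ - θ̃‖∞ + |r̂ - r̃|` makes it feasible for
`(θ̃, r̃)`. Since `|h_j| ≤ M`, this moves the objective by at most `n M` times the displacement,
while replacing `x` by `y` moves a convex combination of the `h_j` by at most
`(max_j L_j) ‖x - y‖`. Taking suprema gives `ν(x, θ̂, r̂) ≤ ν(y, θ̃, r̃) + ...`, and symmetry the
other inequality.
-/

lemma simplex_eq_stdSimplex (n : ℕ) : simplex n = stdSimplex ℝ (Fin n) := by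
  ext θ
  exact and_comm

lemma convex_simplex (n : ℕ) : Convex ℝ (simplex n) := by
  rw [simplex_eq_stdSimplex]
  exact convex_stdSimplex ℝ (Fin n)

-- Move `θ` along the segment `[θ, c]` just until it enters `closedBall c r`.
lemma Convex.exists_mem_closedBall_dist_le {E : Type*} [SeminormedAddCommGroup E]
    [NormedSpace ℝ E] {S : Set E} (hS : Convex ℝ S) {c θ : E} (hc : c ∈ S) (hθ : θ ∈ S)
    {r s : ℝ} (hr : 0 ≤ r) (hs : 0 ≤ s) (hθc : dist θ c ≤ s + r) :
    ∃ θ' ∈ S, dist θ' c ≤ r ∧ dist θ θ' ≤ s := by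
  by_cases hclose : dist θ c ≤ r
  · exact ⟨θ, hθ, hclose, by simpa using hs⟩
  rw [not_le] at hclose
  have hD : 0 < dist θ c := hr.trans_lt hclose
  set t := r / dist θ c
  have ht : t ∈ Icc (0 : ℝ) 1 := ⟨div_nonneg hr hD.le, (div_le_one hD).2 hclose.le⟩
  refine ⟨c + t • (θ - c), hS.add_smul_sub_mem hc hθ ht, ?_, ?_⟩
  · rw [dist_eq_norm, add_sub_cancel_left, norm_smul, Real.norm_of_nonneg ht.1, ← dist_eq_norm,
      div_mul_cancel₀ _ hD.ne']
  · have hθθ' : θ - (c + t • (θ - c)) = (1 - t) • (θ - c) := by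
      rw [sub_smul, one_smul]; abel
    rw [dist_eq_norm, hθθ', norm_smul, Real.norm_of_nonneg (sub_nonneg.2 ht.2), ← dist_eq_norm,
      sub_mul, one_mul, div_mul_cancel₀ _ hD.ne']
    linarith

lemma exists_mem_amb_norm_sub_le {n : ℕ} {c₁ c₂ θ : Fin n → ℝ} {r₁ r₂ : ℝ}
    (hc₂ : c₂ ∈ simplex n) (hr₂ : 0 ≤ r₂) (hθ : θ ∈ amb c₁ r₁) :
    ∃ θ' ∈ amb c₂ r₂, ‖θ - θ'‖ ≤ ‖c₁ - c₂‖ + |r₁ - r₂| := by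
  obtain ⟨hθc₁, hθS⟩ := hθ
  have hθc₂ : dist θ c₂ ≤ (‖c₁ - c₂‖ + |r₁ - r₂|) + r₂ := by
    calc dist θ c₂ ≤ dist θ c₁ + dist c₁ c₂ := dist_triangle _ _ _
      _ ≤ r₁ + ‖c₁ - c₂‖ := by rw [dist_eq_norm, dist_eq_norm]; exact add_le_add_left hθc₁ _
      _ ≤ _ := by linarith [le_abs_self (r₁ - r₂)]
  obtain ⟨θ', hθ'S, hθ'c₂, hθθ'⟩ := (convex_simplex n).exists_mem_closedBall_dist_le hc₂ hθS hr₂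
    (by positivity) hθc₂
  exact ⟨θ', ⟨(dist_eq_norm θ' c₂).symm.trans_le hθ'c₂, hθ'S⟩,
    (dist_eq_norm θ θ').symm.trans_le hθθ'⟩

lemma sum_mul_le_of_mem_stdSimplex {ι : Type*} [Fintype ι] {θ a : ι → ℝ} {K : ℝ}
    (hθ : θ ∈ stdSimplex ℝ ι) (ha : ∀ j, a j ≤ K) : ∑ j, θ j * a j ≤ K :=
  calc ∑ j, θ j * a j ≤ ∑ j, θ j * K :=
        Finset.sum_le_sum fun j _ => mul_le_mul_of_nonneg_left (ha j) (hθ.1 j)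
    _ = K := by rw [← Finset.sum_mul, hθ.2, one_mul]

lemma sum_mul_le_card_mul_mul_norm {ι : Type*} [Fintype ι] {u v : ι → ℝ} {M δ : ℝ}
    (hu : ‖u‖ ≤ δ) (hv : ∀ j, |v j| ≤ M) : ∑ j, u j * v j ≤ Fintype.card ι * M * δ :=
  calc ∑ j, u j * v j ≤ ∑ _j : ι, δ * M := Finset.sum_le_sum fun j _ => by
        calc u j * v j ≤ |u j| * |v j| := by rw [← abs_mul]; exact le_abs_self _
          _ ≤ δ * M := mul_le_mul ((norm_le_pi_norm u j).trans hu) (hv j) (abs_nonneg _)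
              ((norm_nonneg u).trans hu)
    _ = Fintype.card ι * M * δ := by
        rw [Finset.sum_const, Finset.card_univ, nsmul_eq_mul]; ring

lemma csSup_image_le_csSup_image_add {α β : Type*} {f : α → ℝ} {g : β → ℝ} {A : Set α}
    {B : Set β} {K : ℝ} (hA : A.Nonempty) (hg : BddAbove (g '' B))
    (hfg : ∀ a ∈ A, ∃ b ∈ B, f a ≤ g b + K) : sSup (f '' A) ≤ sSup (g '' B) + K := by
  refine csSup_le (hA.image f) ?_
  rintro _ ⟨a, ha, rfl⟩
  obtain ⟨b, hb, hab⟩ := hfg a ha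
  linarith [le_csSup hg (mem_image_of_mem g hb)]

lemma obj_zero {n d : ℕ} (h : Fin n → (Fin d → ℝ) → ℝ) (x : Fin d → ℝ) (θ : Fin n → ℝ) :
    obj h 0 x θ = ∑ j, θ j * h j x := by
  simp [obj]

lemma nuval_zero_le_add {n d : ℕ} {h : Fin n → (Fin d → ℝ) → ℝ} {x y : Fin d → ℝ}
    {c₁ c₂ : Fin n → ℝ} {r₁ r₂ K M : ℝ} (hc₁ : c₁ ∈ simplex n) (hr₁ : 0 ≤ r₁)
    (hc₂ : c₂ ∈ simplex n) (hr₂ : 0 ≤ r₂) (hK : ∀ j, h j x - h j y ≤ K)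
    (hM : ∀ j, |h j y| ≤ M) :
    nuval h 0 x c₁ r₁ ≤ nuval h 0 y c₂ r₂ + (K + n * M * (‖c₁ - c₂‖ + |r₁ - r₂|)) := by
  have hc₁_mem : c₁ ∈ amb c₁ r₁ := ⟨by simpa using hr₁, hc₁⟩
  have hbdd : BddAbove (obj h 0 y '' amb c₂ r₂) := by
    refine ⟨M, ?_⟩
    rintro _ ⟨θ, ⟨-, hθ⟩, rfl⟩
    rw [simplex_eq_stdSimplex] at hθ
    rw [obj_zero]
    exact sum_mul_le_of_mem_stdSimplex hθ fun j => (le_abs_self _).trans (hM j)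
  refine csSup_image_le_csSup_image_add ⟨c₁, hc₁_mem⟩ hbdd fun θ hθ => ?_
  obtain ⟨θ', hθ', hθθ'⟩ := exists_mem_amb_norm_sub_le hc₂ hr₂ hθ
  refine ⟨θ', hθ', ?_⟩
  have hθS : θ ∈ stdSimplex ℝ (Fin n) := simplex_eq_stdSimplex n ▸ hθ.2
  have hx_to_y : ∑ j, θ j * h j x - ∑ j, θ j * h j y ≤ K := by
    rw [← Finset.sum_sub_distrib]
    simpa only [mul_sub] using sum_mul_le_of_mem_stdSimplex hθS hK
  have hθ_to_θ' : ∑ j, θ j * h j y - ∑ j, θ' j * h j y ≤ n * M * (‖c₁ - c₂‖ + |r₁ - r₂|) := by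
    rw [← Finset.sum_sub_distrib]
    simpa only [Pi.sub_apply, sub_mul, Fintype.card_fin] using
      sum_mul_le_card_mul_mul_norm hθθ' hM
  rw [obj_zero, obj_zero]
  linarith

theorem nu_lipschitz_general {n d : ℕ}
    (X : Set (Fin d → ℝ))
    (h : Fin n → (Fin d → ℝ) → ℝ) (L : Fin n → ℝ) (M : ℝ)
    (hLip : ∀ j, ∀ x ∈ X, ∀ y ∈ X,
      |h j x - h j y| ≤ L j * Real.sqrt (∑ i, (x i - y i) ^ 2))
    (hM : ∀ j, ∀ x ∈ X, |h j x| ≤ M) :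
    ∀ x ∈ X, ∀ y ∈ X, ∀ θh ∈ simplex n, ∀ θt ∈ simplex n,
      ∀ rh ∈ Set.Icc (0 : ℝ) 1, ∀ rt ∈ Set.Icc (0 : ℝ) 1,
      |nuval h 0 x θh rh - nuval h 0 y θt rt|
        ≤ (⨆ j, L j) * Real.sqrt (∑ i, (x i - y i) ^ 2)
          + (n : ℝ) * M * (‖θh - θt‖ + |rh - rt|) := by
  intro x hx y hy θh hθh θt hθt rh hrh rt hrt
  have hLip_sup : ∀ j, ∀ x ∈ X, ∀ y ∈ X,
      h j x - h j y ≤ (⨆ j, L j) * Real.sqrt (∑ i, (x i - y i) ^ 2) := fun j x hx y hy =>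
    (le_abs_self _).trans <| (hLip j x hx y hy).trans <| mul_le_mul_of_nonneg_right
      (le_ciSup (Set.finite_range L).bddAbove j) (Real.sqrt_nonneg _)
  have hdist_symm : ∑ i, (y i - x i) ^ 2 = ∑ i, (x i - y i) ^ 2 :=
    Finset.sum_congr rfl fun i _ => by ring
  have hxy := nuval_zero_le_add hθh hrh.1 hθt hrt.1 (hLip_sup · x hx y hy) (hM · y hy)
  have hyx := nuval_zero_le_add hθt hrt.1 hθh hrh.1 (hLip_sup · y hy x hx) (hM · x hx)
  rw [hdist_symm, norm_sub_rev θt, abs_sub_comm rt] at hyx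
  rw [abs_sub_le_iff]
  constructor <;> linarith

/-- Lemma 3.3: Lipschitz continuity of the optimal value function ν. -/
theorem nu_lipschitz {n d : ℕ} (hn : 1 ≤ n) (hd : 1 ≤ d)
    (X : Set (Fin d → ℝ)) (hXne : X.Nonempty) (hXcomp : IsCompact X) (hXconv : Convex ℝ X)
    (h : Fin n → (Fin d → ℝ) → ℝ) (L : Fin n → ℝ) (M : ℝ)
    (hL : ∀ j, 0 < L j)
    (hLip : ∀ j, ∀ x ∈ X, ∀ y ∈ X,
      |h j x - h j y| ≤ L j * Real.sqrt (∑ i, (x i - y i) ^ 2))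
    (hM : ∀ j, ∀ x ∈ X, |h j x| ≤ M) :
    ∀ x ∈ X, ∀ y ∈ X, ∀ θh ∈ simplex n, ∀ θt ∈ simplex n,
      ∀ rh ∈ Set.Icc (0 : ℝ) 1, ∀ rt ∈ Set.Icc (0 : ℝ) 1,
      |nuval h 0 x θh rh - nuval h 0 y θt rt|
        ≤ (⨆ j, L j) * Real.sqrt (∑ i, (x i - y i) ^ 2)
          + (n : ℝ) * M * (‖θh - θt‖ + |rh - rt|) :=
  nu_lipschitz_general X h L M hLip hM
end
end

section
/- Fix λ > 0. Suppose each G_j and each h_j is Lipschitz continuous, |h_j(x)| ≤ M and every component of G_j(x) is bounded by M in absolute value on 𝒳. Let (θ_N, r_N) → (θ^c, r^c) in Θ × [0,1]. Assume: (a) there exist p ≥ 1 and γ > 0 such that ψ_x^λ(τ) ≥ γ τ^p for all x ∈ 𝒳 and τ ≥ 0, with the lower-level growth function taken at (θ^c, r^c) and at every (θ_N, r_N); and (b) there exist a neighborhood U of (θ^c, r^c) in Θ × [0,1], constants p̄ ≥ 1, γ̄ > 0 and τ₀ > 0 such that ψ^λ_{θ,r}(τ) ≥ γ̄ τ^{p̄}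 for all (θ, r) ∈ U and τ ∈ [0, τ₀]. Then for every τ > 0 and every t > 0: (i) liminf_{N→∞} ψ^λ_{θ_N, r_N}(τ) ≥ ψ^λ_{θ^c, r^c}(τ), and (ii) limsup_{N→∞} (ψ^λ_{θ_N, r_N})^{-1}(t) ≤ (ψ^λ_{θ^c, r^c})^{-1}(t). -/
/-!
The lower-level growth at `(θ_N, r_N)` moves every maximizer at `(θ^c, r^c)` to one at
`(θ_N, r_N)` within `O(Δ_N + Δ_N^{1/p})`, `Δ_N` the distance of the parameters; hence every
solution at `(θ^c, r^c)` is an approximate solution at `(θ_N, r_N)` with vanishing residual, and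
the local growth (b) turns this residual into a vanishing distance to `𝔛(θ_N, r_N)`. On the other
hand, approximate solutions with residual `≤ ρ` have closed graph in the parameters (maximizers
pass to the limit because the ambiguity sets move continuously, and normal cones have closed
graph). So near-minimizers for `ψ_{θ_N,r_N}(τ)` accumulate at a point admissible for
`ψ_{θ^c,r^c}(τ)` with the same residual bound, which is (i); (ii) follows from (i) because every
`ψ_{θ_N,r_N}` is nondecreasing.
-/

open Set Filter MeasureTheory
open scoped ENNReal

noncomputable section

open Metric Topology

namespace BayesianDRVI

variable {n d : ℕ} {X : Set (Fin d → ℝ)} {G : Fin n → (Fin d → ℝ) → Fin d → ℝ}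
  {h : Fin n → (Fin d → ℝ) → ℝ} {lam : ℝ}

lemma simplex_eq_stdSimplex (n : ℕ) : simplex n = stdSimplex ℝ (Fin n) := by
  ext θ
  simp [simplex, stdSimplex, and_comm]

lemma isCompact_simplex : IsCompact (simplex n) := by
  rw [simplex_eq_stdSimplex]
  exact isCompact_stdSimplex ℝ (Fin n)

lemma convex_simplex : Convex ℝ (simplex n) := by
  rw [simplex_eq_stdSimplex]
  exact convex_stdSimplex ℝ (Fin n)

lemma isCompact_amb (c : Fin n → ℝ) (r : ℝ) : IsCompact (amb c r) :=
  isCompact_simplex.of_isClosed_subset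
    ((isClosed_le (by fun_prop) continuous_const).inter isCompact_simplex.isClosed)
    inter_subset_right

lemma exists_mem_segment_dist_le {E : Type*} [NormedAddCommGroup E] [NormedSpace ℝ E]
    {x y : E} {a b : ℝ} (ha : 0 ≤ a) (hb : 0 ≤ b) (hxy : dist x y ≤ a + b) :
    ∃ z ∈ segment ℝ x y, dist x z ≤ a ∧ dist z y ≤ b := by
  rcases le_or_gt (dist x y) a with hle | hlt
  · exact ⟨y, right_mem_segment ℝ x y, hle, by simpa using hb⟩
  have hpos : 0 < dist x y := ha.trans_lt hlt
  have ht : a / dist x y ∈ Icc (0 : ℝ) 1 := ⟨by positivity, (div_le_one hpos).2 hlt.le⟩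
  refine ⟨AffineMap.lineMap x y (a / dist x y), ?_, ?_, ?_⟩
  · rw [segment_eq_image_lineMap]
    exact mem_image_of_mem _ ht
  · rw [dist_comm, dist_lineMap_left, Real.norm_of_nonneg ht.1, div_mul_cancel₀ _ hpos.ne']
  · rw [dist_lineMap_right, Real.norm_of_nonneg (sub_nonneg.2 ht.2), sub_mul, one_mul,
      div_mul_cancel₀ _ hpos.ne']
    linarith

lemma exists_mem_amb_dist_le {c c' θ : Fin n → ℝ} {r r' : ℝ} (hc' : c' ∈ simplex n)
    (hr' : 0 ≤ r') (hθ : θ ∈ amb c r) :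
    ∃ θ' ∈ amb c' r', dist θ θ' ≤ dist c c' + |r - r'| := by
  have hθc : dist θ c ≤ r := by rw [dist_eq_norm]; exact hθ.1
  have hθc' : dist θ c' ≤ (dist c c' + |r - r'|) + r' := by
    linarith [dist_triangle θ c c', le_abs_self (r - r')]
  obtain ⟨θ', hseg, hθθ', hθ'c'⟩ := exists_mem_segment_dist_le (by positivity) hr' hθc'
  exact ⟨θ', ⟨(dist_eq_norm θ' c' ▸ hθ'c' : ‖θ' - c'‖ ≤ r'),
    convex_simplex.segment_subset hθ.2 hc' hseg⟩, hθθ'⟩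

lemma abs_sum_mul_le {ι : Type*} [Fintype ι] (u v : ι → ℝ) : |∑ j, u j * v j| ≤ ‖u‖ * ∑ j, |v j| := by
  rw [Finset.mul_sum]
  refine (Finset.abs_sum_le_sum_abs _ _).trans (Finset.sum_le_sum fun j _ => ?_)
  rw [abs_mul]
  exact mul_le_mul_of_nonneg_right (by simpa using norm_le_pi_norm u j) (abs_nonneg _)

lemma sum_abs_le_mul {v : Fin n → ℝ} {M : ℝ} (hv : ∀ j, |v j| ≤ M) : ∑ j, |v j| ≤ n * M :=
  (Finset.sum_le_sum fun j _ => hv j).trans_eq (by simp)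

lemma abs_obj_sub_obj_le {M : ℝ} {x : Fin d → ℝ}
    (hM : ∀ j, |h j x| ≤ M) (hlam : 0 ≤ lam) {θ θ' : Fin n → ℝ} (hθ : θ ∈ simplex n)
    (hθ' : θ' ∈ simplex n) :
    |obj h lam x θ - obj h lam x θ'| ≤ (n * M + 2 * lam) * dist θ θ' := by
  have hlin : ∑ j, (θ - θ') j * h j x = ∑ j, θ j * h j x - ∑ j, θ' j * h j x := by
    simp [sub_mul, Finset.sum_sub_distrib]
  have hquad : ∑ j, (θ - θ') j * (θ j + θ' j) = ∑ j, θ j ^ 2 - ∑ j, θ' j ^ 2 := by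
    rw [← Finset.sum_sub_distrib]
    exact Finset.sum_congr rfl fun j _ => by simp only [Pi.sub_apply]; ring
  have hsum : ∑ j, |θ j + θ' j| = 2 := by
    rw [Finset.sum_congr rfl fun j _ => abs_of_nonneg (add_nonneg (hθ.2 j) (hθ'.2 j)),
      Finset.sum_add_distrib, hθ.1, hθ'.1]
    norm_num
  have hsplit : obj h lam x θ - obj h lam x θ' =
      ∑ j, (θ - θ') j * h j x - lam * ∑ j, (θ - θ') j * (θ j + θ' j) := by
    rw [hlin, hquad, obj, obj]
    ring
  rw [hsplit, dist_eq_norm]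
  calc _ ≤ |∑ j, (θ - θ') j * h j x| + lam * |∑ j, (θ - θ') j * (θ j + θ' j)| :=
        (abs_sub _ _).trans_eq (by rw [abs_mul, abs_of_nonneg hlam])
    _ ≤ ‖θ - θ'‖ * (n * M) + lam * (‖θ - θ'‖ * 2) :=
        add_le_add ((abs_sum_mul_le _ _).trans (by gcongr; exact sum_abs_le_mul hM))
          (mul_le_mul_of_nonneg_left ((abs_sum_mul_le _ _).trans_eq (by rw [hsum])) hlam)
    _ = _ := by ring

lemma le_rpow_inv_of_mul_rpow_le {τ γ p a : ℝ} (hτ : 0 ≤ τ) (hγ : 0 < γ) (hp : 0 < p)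
    (hle : γ * τ ^ p ≤ a) : τ ≤ (a / γ) ^ p⁻¹ := by
  have hτp : 0 ≤ γ * τ ^ p := mul_nonneg hγ.le (Real.rpow_nonneg hτ p)
  rw [Real.le_rpow_inv_iff_of_pos hτ (div_nonneg (hτp.trans hle) hγ.le) hp, le_div_iff₀ hγ]
  linarith

lemma continuousOn_of_norm_sub_le {E F : Type*} [SeminormedAddCommGroup E]
    [SeminormedAddCommGroup F] {f : E → F} {s : Set E}
    (hf : ∃ L : ℝ, ∀ x ∈ s, ∀ y ∈ s, ‖f x - f y‖ ≤ L * ‖x - y‖) : ContinuousOn f s := by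
  obtain ⟨L, hL⟩ := hf
  exact (LipschitzOnWith.of_dist_le' (K := L) (by simpa only [dist_eq_norm] using hL)).continuousOn

lemma tendsto_comp_of_continuousOn {α β ι : Type*} [TopologicalSpace α] [TopologicalSpace β]
    {f : α → β} {s : Set α} {l : Filter ι} {x : ι → α} {a : α} (hf : ContinuousOn f s)
    (ha : a ∈ s) (hx : Tendsto x l (𝓝 a)) (hxs : ∀ i, x i ∈ s) :
    Tendsto (fun i => f (x i)) l (𝓝 (f a)) :=
  (hf a ha).tendsto.comp (tendsto_nhdsWithin_iff.2 ⟨hx, Eventually.of_forall hxs⟩)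

lemma tendsto_dist_add_abs_sub {α ι : Type*} [PseudoMetricSpace α] {l : Filter ι} {c : ι → α}
    {r : ι → ℝ} {c₀ : α} {r₀ : ℝ} (hc : Tendsto c l (𝓝 c₀)) (hr : Tendsto r l (𝓝 r₀)) :
    Tendsto (fun i => dist c₀ (c i) + |r₀ - r i|) l (𝓝 0) := by
  simpa using ((tendsto_const_nhds (x := c₀)).dist hc).add
    ((tendsto_const_nhds (x := r₀)).sub hr).abs

section Argmax

variable {x : Fin d → ℝ} {c : Fin n → ℝ} {r : ℝ}

lemma continuous_obj : Continuous (obj h lam x) := by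
  unfold obj
  fun_prop

lemma obj_le_nuval {θ : Fin n → ℝ} (hθ : θ ∈ amb c r) : obj h lam x θ ≤ nuval h lam x c r :=
  le_csSup ((isCompact_amb c r).bddAbove_image continuous_obj.continuousOn) (mem_image_of_mem _ hθ)

lemma mem_argmaxSet_iff {θ : Fin n → ℝ} :
    θ ∈ argmaxSet h lam x c r ↔
      θ ∈ amb c r ∧ ∀ θ' ∈ amb c r, obj h lam x θ' ≤ obj h lam x θ := by
  refine ⟨fun hθ => ⟨hθ.1, fun θ' hθ' => (obj_le_nuval hθ').trans_eq hθ.2.symm⟩,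
    fun ⟨hθ, hmax⟩ => ⟨hθ, ?_⟩⟩
  exact (IsGreatest.csSup_eq ⟨mem_image_of_mem _ hθ, forall_mem_image.2 hmax⟩).symm

lemma argmaxSet_nonempty (hc : c ∈ simplex n) (hr : 0 ≤ r) :
    (argmaxSet h lam x c r).Nonempty := by
  obtain ⟨θ, hθ, hmax⟩ := (isCompact_amb c r).exists_isMaxOn ⟨c, by simpa using hr, hc⟩
    continuous_obj.continuousOn
  exact ⟨θ, mem_argmaxSet_iff.2 ⟨hθ, fun θ' hθ' => hmax hθ'⟩⟩

lemma isCompact_argmaxSet : IsCompact (argmaxSet h lam x c r) :=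
  (isCompact_amb c r).of_isClosed_subset
    ((isCompact_amb c r).isClosed.inter (isClosed_eq continuous_obj continuous_const))
    fun _ hθ => hθ.1

lemma nuval_le_nuval_add {M : ℝ} (hM : ∀ j, |h j x| ≤ M) (hM0 : 0 ≤ M) (hlam : 0 ≤ lam)
    {c' : Fin n → ℝ} {r' : ℝ} (hc : c ∈ simplex n) (hr : 0 ≤ r) (hc' : c' ∈ simplex n)
    (hr' : 0 ≤ r') :
    nuval h lam x c r ≤ nuval h lam x c' r' + (n * M + 2 * lam) * (dist c c' + |r - r'|) := by
  obtain ⟨θ, hθ⟩ := argmaxSet_nonempty (h := h) (lam := lam) (x := x) hc hr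
  obtain ⟨θ', hθ', hdist⟩ := exists_mem_amb_dist_le hc' hr' hθ.1
  have hobj := (le_abs_self _).trans (abs_obj_sub_obj_le hM hlam hθ.1.2 hθ'.2)
  have hL : (n * M + 2 * lam) * dist θ θ' ≤ (n * M + 2 * lam) * (dist c c' + |r - r'|) :=
    mul_le_mul_of_nonneg_left hdist (by positivity)
  linarith [obj_le_nuval (h := h) (lam := lam) (x := x) hθ', hθ.2]

lemma infDist_argmaxSet_le {γ p a : ℝ} (hγ : 0 < γ) (hp : 0 < p)
    (hgrow : ∀ τ : ℝ, 0 ≤ τ → ENNReal.ofReal (γ * τ ^ p) ≤ psiLow h lam x c r τ)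
    {θ : Fin n → ℝ} (hθ : θ ∈ amb c r) (hgap : nuval h lam x c r - obj h lam x θ ≤ a) :
    infDist θ (argmaxSet h lam x c r) ≤ (a / γ) ^ p⁻¹ := by
  refine le_rpow_inv_of_mul_rpow_le infDist_nonneg hγ hp (le_trans ?_ hgap)
  have := (hgrow _ infDist_nonneg).trans
    (iInf₂_le θ ⟨hθ, le_rfl⟩ : psiLow h lam x c r (infDist θ (argmaxSet h lam x c r)) ≤ _)
  rwa [ENNReal.ofReal_le_ofReal_iff (sub_nonneg.2 (obj_le_nuval hθ))] at this

lemma exists_mem_argmaxSet_dist_le {M γ p : ℝ} (hM : ∀ j, |h j x| ≤ M) (hM0 : 0 ≤ M)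
    (hlam : 0 ≤ lam) (hγ : 0 < γ) (hp : 0 < p) {c' : Fin n → ℝ} {r' : ℝ}
    (hc : c ∈ simplex n) (hr : 0 ≤ r) (hc' : c' ∈ simplex n) (hr' : 0 ≤ r')
    (hgrow : ∀ τ : ℝ, 0 ≤ τ → ENNReal.ofReal (γ * τ ^ p) ≤ psiLow h lam x c' r' τ)
    {θ : Fin n → ℝ} (hθ : θ ∈ argmaxSet h lam x c r) :
    ∃ θ' ∈ argmaxSet h lam x c' r', dist θ θ' ≤ (dist c c' + |r - r'|) +
      (2 * (n * M + 2 * lam) * (dist c c' + |r - r'|) / γ) ^ p⁻¹ := by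
  obtain ⟨θ₁, hθ₁, hθθ₁⟩ := exists_mem_amb_dist_le hc' hr' hθ.1
  have hgap : nuval h lam x c' r' - obj h lam x θ₁ ≤
      2 * (n * M + 2 * lam) * (dist c c' + |r - r'|) := by
    have hobj := (le_abs_self _).trans (abs_obj_sub_obj_le hM hlam hθ.1.2 hθ₁.2)
    have hnuval := nuval_le_nuval_add hM hM0 hlam hc' hr' hc hr
    rw [dist_comm c', abs_sub_comm r'] at hnuval
    have hL : (n * M + 2 * lam) * dist θ θ₁ ≤ (n * M + 2 * lam) * (dist c c' + |r - r'|) :=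
      mul_le_mul_of_nonneg_left hθθ₁ (by positivity)
    linarith [hθ.2]
  obtain ⟨θ', hθ', hdist⟩ :=
    isCompact_argmaxSet.exists_infDist_eq_dist (argmaxSet_nonempty hc' hr') θ₁
  refine ⟨θ', hθ', (dist_triangle θ θ₁ θ').trans (add_le_add hθθ₁ ?_)⟩
  rw [← hdist]
  exact infDist_argmaxSet_le hγ hp hgrow hθ₁ hgap

end Argmax

section Residual

variable {c : Fin n → ℝ} {r : ℝ}

def weightedField (G : Fin n → (Fin d → ℝ) → Fin d → ℝ) (θ : Fin n → ℝ) (x : Fin d → ℝ) :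
    Fin d → ℝ :=
  fun i => ∑ j, θ j * G j x i

lemma zero_mem_normalCone {x : Fin d → ℝ} : (0 : Fin d → ℝ) ∈ normalCone X x :=
  fun y _ => by simp

lemma isClosed_normalCone (X : Set (Fin d → ℝ)) (x : Fin d → ℝ) :
    IsClosed (normalCone X x) := by
  have : normalCone X x = ⋂ y ∈ X, {v | ∑ i, v i * (y i - x i) ≤ 0} := by
    ext
    simp [normalCone]
  rw [this]
  exact isClosed_biInter fun y _ => isClosed_le (by fun_prop) continuous_const

lemma resid_le_iff {x : Fin d → ℝ} {θ : Fin n → ℝ} {ρ : ℝ} :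
    resid G X x θ ≤ ρ ↔ ∃ w ∈ normalCone X x, ‖weightedField G θ x + w‖ ≤ ρ := by
  show infDist 0 ((weightedField G θ x + ·) '' normalCone X x) ≤ ρ ↔ _
  have hS : IsClosed ((weightedField G θ x + ·) '' normalCone X x) :=
    (Homeomorph.addLeft _).isClosedMap _ (isClosed_normalCone X x)
  constructor
  · intro hle
    obtain ⟨_, ⟨w, hw, rfl⟩, hdist⟩ :=
      hS.exists_infDist_eq_dist ⟨_, mem_image_of_mem _ zero_mem_normalCone⟩ 0
    exact ⟨w, hw, by rwa [← dist_zero_left, ← hdist]⟩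
  · rintro ⟨w, hw, hle⟩
    exact (infDist_le_dist_of_mem (mem_image_of_mem _ hw)).trans (by rwa [dist_zero_left])

lemma norm_weightedField_le {θ : Fin n → ℝ} {x : Fin d → ℝ} {M : ℝ} (hMG : ∀ j i, |G j x i| ≤ M)
    (hM0 : 0 ≤ M) (hθ : θ ∈ simplex n) : ‖weightedField G θ x‖ ≤ M := by
  refine (pi_norm_le_iff_of_nonneg hM0).2 fun i => ?_
  rw [Real.norm_eq_abs]
  calc |∑ j, θ j * G j x i| ≤ ∑ j, θ j * M :=
        (Finset.abs_sum_le_sum_abs _ _).trans <| Finset.sum_le_sum fun j _ => by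
          rw [abs_mul, abs_of_nonneg (hθ.2 j)]
          exact mul_le_mul_of_nonneg_left (hMG j i) (hθ.2 j)
    _ = M := by rw [← Finset.sum_mul, hθ.1, one_mul]

lemma norm_weightedField_sub_le {x : Fin d → ℝ} {M : ℝ} (hMG : ∀ j i, |G j x i| ≤ M)
    (hM0 : 0 ≤ M) (θ θ' : Fin n → ℝ) :
    ‖weightedField G θ x - weightedField G θ' x‖ ≤ n * M * dist θ θ' := by
  refine (pi_norm_le_iff_of_nonneg (by positivity)).2 fun i => ?_
  have : (weightedField G θ x - weightedField G θ' x) i = ∑ j, (θ - θ') j * G j x i := by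
    simp [weightedField, sub_mul]
  rw [Real.norm_eq_abs, this, dist_eq_norm]
  calc _ ≤ ‖θ - θ'‖ * ∑ j, |G j x i| := abs_sum_mul_le _ _
    _ ≤ ‖θ - θ'‖ * (n * M) := by gcongr; exact sum_abs_le_mul (hMG · i)
    _ = _ := by ring

lemma resid_le_resid_add {x : Fin d → ℝ} {M : ℝ} (hMG : ∀ j i, |G j x i| ≤ M) (hM0 : 0 ≤ M)
    (θ θ' : Fin n → ℝ) : resid G X x θ ≤ resid G X x θ' + n * M * dist θ θ' := by
  obtain ⟨w, hw, hle⟩ := resid_le_iff.1 (le_refl (resid G X x θ'))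
  refine resid_le_iff.2 ⟨w, hw, ?_⟩
  calc ‖weightedField G θ x + w‖ =
        ‖(weightedField G θ' x + w) + (weightedField G θ x - weightedField G θ' x)‖ := by
        congr 1; abel
    _ ≤ _ := (norm_add_le _ _).trans (add_le_add hle (norm_weightedField_sub_le hMG hM0 θ θ'))

def approxSolSet (G : Fin n → (Fin d → ℝ) → Fin d → ℝ) (h : Fin n → (Fin d → ℝ) → ℝ)
    (lam : ℝ) (X : Set (Fin d → ℝ)) (c : Fin n → ℝ) (r ρ : ℝ) : Set (Fin d → ℝ) :=
  {x ∈ X | ∃ θ ∈ argmaxSet h lam x c r, resid G X x θ ≤ ρ}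

lemma solSet_eq_approxSolSet_zero : solSet G h lam X c r = approxSolSet G h lam X c r 0 := by
  ext x
  refine and_congr_right fun _ => exists_congr fun θ => and_congr_right fun _ => ?_
  rw [resid_le_iff]
  constructor
  · intro hVI
    refine ⟨-weightedField G θ x, fun y hy => ?_, by simp⟩
    simpa [weightedField, Finset.sum_neg_distrib] using hVI y hy
  · rintro ⟨w, hw, hle⟩ y hy
    obtain rfl : w = -weightedField G θ x := eq_neg_of_add_eq_zero_right (norm_le_zero_iff.1 hle)
    simpa [weightedField, Finset.sum_neg_distrib] using hw y hy

lemma psiSol_le_ofReal {τ ρ : ℝ} {x : Fin d → ℝ} (hx : x ∈ approxSolSet G h lam X c r ρ)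
    (hτ : τ ≤ infDist x (solSet G h lam X c r)) :
    psiSol G h lam X c r τ ≤ ENNReal.ofReal ρ := by
  obtain ⟨hxX, θ, hθ, hres⟩ := hx
  exact (iInf₂_le x ⟨hxX, hτ⟩).trans ((iInf₂_le θ hθ).trans (ENNReal.ofReal_le_ofReal hres))

lemma exists_of_psiSol_lt {τ ρ : ℝ} (hlt : psiSol G h lam X c r τ < ENNReal.ofReal ρ) :
    ∃ x ∈ approxSolSet G h lam X c r ρ, τ ≤ infDist x (solSet G h lam X c r) := by
  simp only [psiSol, iInf_lt_iff] at hlt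
  obtain ⟨x, ⟨hxX, hτ⟩, θ, hθ, hres⟩ := hlt
  exact ⟨x, ⟨hxX, θ, hθ, (ENNReal.ofReal_lt_ofReal_iff'.1 hres).1.le⟩, hτ⟩

lemma monotone_psiSol : Monotone (psiSol G h lam X c r) := fun _ _ hττ' =>
  biInf_mono fun _ hx => ⟨hx.1, hττ'.trans hx.2⟩

lemma infDist_solSet_le {γ p τ₀ ρ : ℝ} {x : Fin d → ℝ} (hγ : 0 < γ) (hp : 0 < p) (hτ₀ : 0 ≤ τ₀)
    (hgrow : ∀ τ ∈ Icc (0 : ℝ) τ₀, ENNReal.ofReal (γ * τ ^ p) ≤ psiSol G h lam X c r τ)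
    (hx : x ∈ approxSolSet G h lam X c r ρ) (hρ : ρ < γ * τ₀ ^ p) :
    infDist x (solSet G h lam X c r) ≤ (ρ / γ) ^ p⁻¹ := by
  have hρ0 : 0 ≤ ρ := by
    obtain ⟨_, _, _, hres⟩ := hx
    exact infDist_nonneg.trans hres
  have key : ∀ τ ∈ Icc (0 : ℝ) τ₀, τ ≤ infDist x (solSet G h lam X c r) → γ * τ ^ p ≤ ρ := by
    intro τ hτ hτx
    have := (hgrow τ hτ).trans (psiSol_le_ofReal hx hτx)
    rwa [ENNReal.ofReal_le_ofReal_iff hρ0] at this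
  by_cases hI : infDist x (solSet G h lam X c r) ≤ τ₀
  · exact le_rpow_inv_of_mul_rpow_le infDist_nonneg hγ hp (key _ ⟨infDist_nonneg, hI⟩ le_rfl)
  · exact absurd (key τ₀ ⟨hτ₀, le_rfl⟩ (not_le.1 hI).le) (not_le.2 hρ)

end Residual

section Deviation

variable {M : ℝ}

lemma solSet_subset_approxSolSet {γ p : ℝ} (hM : ∀ j, ∀ x ∈ X, |h j x| ≤ M)
    (hMG : ∀ j, ∀ x ∈ X, ∀ i, |G j x i| ≤ M) (hM0 : 0 ≤ M) (hlam : 0 ≤ lam) (hγ : 0 < γ)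
    (hp : 0 < p) {c c' : Fin n → ℝ} {r r' : ℝ} (hc : c ∈ simplex n) (hr : 0 ≤ r)
    (hc' : c' ∈ simplex n) (hr' : 0 ≤ r')
    (hgrow : ∀ x ∈ X, ∀ τ : ℝ, 0 ≤ τ → ENNReal.ofReal (γ * τ ^ p) ≤ psiLow h lam x c' r' τ) :
    solSet G h lam X c r ⊆ approxSolSet G h lam X c' r' (n * M * ((dist c c' + |r - r'|) +
      (2 * (n * M + 2 * lam) * (dist c c' + |r - r'|) / γ) ^ p⁻¹)) := by
  intro x hx
  rw [solSet_eq_approxSolSet_zero] at hx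
  obtain ⟨hxX, θ, hθ, hres⟩ := hx
  obtain ⟨θ', hθ', hdist⟩ := exists_mem_argmaxSet_dist_le (hM · x hxX) hM0 hlam hγ hp hc hr hc'
    hr' (hgrow x hxX) hθ
  refine ⟨hxX, θ', hθ', (resid_le_resid_add (hMG · x hxX) hM0 θ' θ).trans ?_⟩
  rw [dist_comm]
  linarith [mul_le_mul_of_nonneg_left hdist (by positivity : (0 : ℝ) ≤ n * M)]

lemma eventually_infDist_solSet_le {γ p γ' p' τ₀ ε : ℝ} (hM : ∀ j, ∀ x ∈ X, |h j x| ≤ M)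
    (hMG : ∀ j, ∀ x ∈ X, ∀ i, |G j x i| ≤ M) (hM0 : 0 ≤ M) (hlam : 0 ≤ lam) (hγ : 0 < γ)
    (hp : 0 < p) (hγ' : 0 < γ') (hp' : 0 < p') (hτ₀ : 0 < τ₀)
    {c₀ : Fin n → ℝ} {r₀ : ℝ} {c : ℕ → Fin n → ℝ} {r : ℕ → ℝ} (hc₀ : c₀ ∈ simplex n)
    (hr₀ : 0 ≤ r₀) (hcs : ∀ N, c N ∈ simplex n) (hr0 : ∀ N, 0 ≤ r N)
    (hc : Tendsto c atTop (𝓝 c₀)) (hr : Tendsto r atTop (𝓝 r₀))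
    (hgrow : ∀ N, ∀ x ∈ X, ∀ τ : ℝ, 0 ≤ τ →
      ENNReal.ofReal (γ * τ ^ p) ≤ psiLow h lam x (c N) (r N) τ)
    (hgrowSol : ∀ᶠ N in atTop, ∀ τ ∈ Icc (0 : ℝ) τ₀,
      ENNReal.ofReal (γ' * τ ^ p') ≤ psiSol G h lam X (c N) (r N) τ)
    (hε : 0 < ε) :
    ∀ᶠ N in atTop, ∀ x ∈ solSet G h lam X c₀ r₀,
      infDist x (solSet G h lam X (c N) (r N)) ≤ ε := by
  set Δ : ℕ → ℝ := fun N => dist c₀ (c N) + |r₀ - r N|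
  set ρ : ℕ → ℝ := fun N => n * M * (Δ N + (2 * (n * M + 2 * lam) * Δ N / γ) ^ p⁻¹)
  have hΔ : Tendsto Δ atTop (𝓝 0) := tendsto_dist_add_abs_sub hc hr
  have hρ : Tendsto ρ atTop (𝓝 0) := by
    have := ((hΔ.const_mul (2 * (n * M + 2 * lam))).div_const γ).rpow_const
      (Or.inr (inv_nonneg.2 hp.le))
    simpa [Real.zero_rpow (inv_ne_zero hp.ne')] using (hΔ.add this).const_mul (n * M : ℝ)
  have hη : Tendsto (fun N => (ρ N / γ') ^ p'⁻¹) atTop (𝓝 0) := by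
    simpa [Real.zero_rpow (inv_ne_zero hp'.ne')] using
      (hρ.div_const γ').rpow_const (Or.inr (inv_nonneg.2 hp'.le))
  filter_upwards [hgrowSol, hρ.eventually (gt_mem_nhds (by positivity : 0 < γ' * τ₀ ^ p')),
    hη.eventually (ge_mem_nhds hε)] with N hgrowN hsmall hηN x hx
  exact (infDist_solSet_le hγ' hp' hτ₀.le hgrowN (solSet_subset_approxSolSet hM hMG hM0 hlam hγ
    hp hc₀ hr₀ (hcs N) (hr0 N) (hgrow N) hx) hsmall).trans hηN

end Deviation

section Limits

variable {ι : Type*} {l : Filter ι} {x : ι → Fin d → ℝ} {θ : ι → Fin n → ℝ} {x₀ : Fin d → ℝ}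
  {θ₀ : Fin n → ℝ}

lemma tendsto_obj (hh : ∀ j, ContinuousOn (h j) X) (hxX : ∀ i, x i ∈ X) (hx₀X : x₀ ∈ X)
    (hx : Tendsto x l (𝓝 x₀)) (hθ : Tendsto θ l (𝓝 θ₀)) :
    Tendsto (fun i => obj h lam (x i) (θ i)) l (𝓝 (obj h lam x₀ θ₀)) :=
  (tendsto_finsetSum _ fun j _ => (tendsto_pi_nhds.1 hθ j).mul
      (tendsto_comp_of_continuousOn (hh j) hx₀X hx hxX)).sub
    ((tendsto_finsetSum _ fun j _ => (tendsto_pi_nhds.1 hθ j).pow 2).const_mul lam)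

lemma tendsto_weightedField (hG : ∀ j, ContinuousOn (G j) X) (hxX : ∀ i, x i ∈ X)
    (hx₀X : x₀ ∈ X) (hx : Tendsto x l (𝓝 x₀)) (hθ : Tendsto θ l (𝓝 θ₀)) :
    Tendsto (fun i => weightedField G (θ i) (x i)) l (𝓝 (weightedField G θ₀ x₀)) :=
  tendsto_pi_nhds.2 fun k => tendsto_finsetSum _ fun j _ => (tendsto_pi_nhds.1 hθ j).mul
    (tendsto_pi_nhds.1 (tendsto_comp_of_continuousOn (hG j) hx₀X hx hxX) k)

variable [l.NeBot]

lemma mem_argmaxSet_of_tendsto (hh : ∀ j, ContinuousOn (h j) X) {c : ι → Fin n → ℝ}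
    {r : ι → ℝ} {c₀ : Fin n → ℝ} {r₀ : ℝ} (hcs : ∀ i, c i ∈ simplex n) (hr0 : ∀ i, 0 ≤ r i)
    (hxX : ∀ i, x i ∈ X) (hx₀X : x₀ ∈ X) (hθmax : ∀ i, θ i ∈ argmaxSet h lam (x i) (c i) (r i))
    (hc : Tendsto c l (𝓝 c₀)) (hr : Tendsto r l (𝓝 r₀)) (hx : Tendsto x l (𝓝 x₀))
    (hθ : Tendsto θ l (𝓝 θ₀)) : θ₀ ∈ argmaxSet h lam x₀ c₀ r₀ := by
  have hamb : θ₀ ∈ amb c₀ r₀ :=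
    ⟨le_of_tendsto_of_tendsto' (hθ.sub hc).norm hr fun i => (hθmax i).1.1,
      isCompact_simplex.isClosed.mem_of_tendsto hθ (Eventually.of_forall fun i => (hθmax i).1.2)⟩
  refine mem_argmaxSet_iff.2 ⟨hamb, fun θ' hθ' => ?_⟩
  choose θ'' hθ'' hdist using fun i => exists_mem_amb_dist_le (hcs i) (hr0 i) hθ'
  have hθ''lim : Tendsto θ'' l (𝓝 θ') := tendsto_iff_dist_tendsto_zero.2 <|
    squeeze_zero (fun _ => dist_nonneg) (fun i => (dist_comm _ _).trans_le (hdist i))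
      (tendsto_dist_add_abs_sub hc hr)
  exact le_of_tendsto_of_tendsto' (tendsto_obj hh hxX hx₀X hx hθ''lim)
    (tendsto_obj hh hxX hx₀X hx hθ)
    fun i => (mem_argmaxSet_iff.1 (hθmax i)).2 _ (hθ'' i)

lemma mem_normalCone_of_tendsto {w : ι → Fin d → ℝ} {w₀ : Fin d → ℝ}
    (hw : ∀ i, w i ∈ normalCone X (x i)) (hx : Tendsto x l (𝓝 x₀)) (hw₀ : Tendsto w l (𝓝 w₀)) :
    w₀ ∈ normalCone X x₀ := fun y hy =>
  le_of_tendsto' (((by fun_prop : Continuous fun p : (Fin d → ℝ) × (Fin d → ℝ) =>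
    ∑ i, p.2 i * (y i - p.1 i)).tendsto (x₀, w₀)).comp (hx.prodMk_nhds hw₀)) fun i => hw i y hy

end Limits

section Cluster

variable {M ρ : ℝ} {c : ℕ → Fin n → ℝ} {r : ℕ → ℝ}
  {c₀ : Fin n → ℝ} {r₀ : ℝ}

lemma mem_approxSolSet_of_tendsto (hXc : IsClosed X) (hG : ∀ j, ContinuousOn (G j) X)
    (hh : ∀ j, ContinuousOn (h j) X) (hMG : ∀ j, ∀ x ∈ X, ∀ i, |G j x i| ≤ M) (hM0 : 0 ≤ M)
    (hcs : ∀ k, c k ∈ simplex n) (hr0 : ∀ k, 0 ≤ r k) {x : ℕ → Fin d → ℝ} {x₀ : Fin d → ℝ}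
    (hxρ : ∀ k, x k ∈ approxSolSet G h lam X (c k) (r k) ρ)
    (hc : Tendsto c atTop (𝓝 c₀)) (hr : Tendsto r atTop (𝓝 r₀)) (hx : Tendsto x atTop (𝓝 x₀)) :
    x₀ ∈ approxSolSet G h lam X c₀ r₀ ρ := by
  have hxX k : x k ∈ X := (hxρ k).1
  have hx₀X : x₀ ∈ X := hXc.mem_of_tendsto hx (Eventually.of_forall hxX)
  choose θ hθ hres using fun k => (hxρ k).2
  choose w hw hwρ using fun k => resid_le_iff.1 (hres k)
  have hbound k : (θ k, w k) ∈ simplex n ×ˢ closedBall (0 : Fin d → ℝ) (ρ + M) := by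
    refine ⟨(hθ k).1.2, mem_closedBall_zero_iff.2 ?_⟩
    calc ‖w k‖ = ‖(weightedField G (θ k) (x k) + w k) - weightedField G (θ k) (x k)‖ := by
          rw [add_sub_cancel_left]
      _ ≤ ρ + M := (norm_sub_le _ _).trans
          (add_le_add (hwρ k) (norm_weightedField_le (hMG · _ (hxX k)) hM0 (hθ k).1.2))
  obtain ⟨⟨θ₀, w₀⟩, -, φ, hφ, hlim⟩ :=
    (isCompact_simplex.prod (isCompact_closedBall _ _)).tendsto_subseq hbound
  have hθφ : Tendsto (θ ∘ φ) atTop (𝓝 θ₀) := (continuous_fst.tendsto _).comp hlim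
  have hwφ : Tendsto (w ∘ φ) atTop (𝓝 w₀) := (continuous_snd.tendsto _).comp hlim
  have hxφ := hx.comp hφ.tendsto_atTop
  refine ⟨hx₀X, θ₀, mem_argmaxSet_of_tendsto hh (fun k => hcs (φ k)) (fun k => hr0 (φ k))
    (fun k => hxX (φ k)) hx₀X (fun k => hθ (φ k)) (hc.comp hφ.tendsto_atTop)
    (hr.comp hφ.tendsto_atTop) hxφ hθφ, resid_le_iff.2 ⟨w₀,
      mem_normalCone_of_tendsto (fun k => hw (φ k)) hxφ hwφ, ?_⟩⟩
  exact le_of_tendsto' ((tendsto_weightedField hG (fun k => hxX (φ k)) hx₀X hxφ hθφ).add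
    hwφ).norm fun k => hwρ (φ k)

lemma exists_mem_approxSolSet_of_frequently (hXc : IsCompact X)
    (hG : ∀ j, ContinuousOn (G j) X) (hh : ∀ j, ContinuousOn (h j) X)
    (hMG : ∀ j, ∀ x ∈ X, ∀ i, |G j x i| ≤ M) (hM0 : 0 ≤ M)
    (hcs : ∀ N, c N ∈ simplex n) (hr0 : ∀ N, 0 ≤ r N)
    (hc : Tendsto c atTop (𝓝 c₀)) (hr : Tendsto r atTop (𝓝 r₀)) {P : ℕ → (Fin d → ℝ) → Prop}
    (hfreq : ∃ᶠ N in atTop, ∃ x ∈ approxSolSet G h lam X (c N) (r N) ρ, P N x) :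
    ∃ x₀ ∈ approxSolSet G h lam X c₀ r₀ ρ, ∃ φ : ℕ → ℕ, StrictMono φ ∧
      ∃ x : ℕ → Fin d → ℝ, (∀ k, P (φ k) (x k)) ∧ Tendsto x atTop (𝓝 x₀) := by
  obtain ⟨φ, hφ, hφP⟩ := extraction_of_frequently_atTop hfreq
  choose x hxρ hxP using hφP
  obtain ⟨x₀, -, ψ, hψ, hlim⟩ := hXc.tendsto_subseq fun k => (hxρ k).1
  have hφψ := (hφ.comp hψ).tendsto_atTop
  exact ⟨x₀, mem_approxSolSet_of_tendsto hXc.isClosed hG hh hMG hM0 (fun _ => hcs _)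
    (fun _ => hr0 _) (fun k => hxρ (ψ k)) (hc.comp hφψ) (hr.comp hφψ) hlim,
    φ ∘ ψ, hφ.comp hψ, x ∘ ψ, fun k => hxP (ψ k), hlim⟩

lemma exists_mem_approxSolSet_le_infDist (hXc : IsCompact X)
    (hG : ∀ j, ContinuousOn (G j) X) (hh : ∀ j, ContinuousOn (h j) X)
    (hMG : ∀ j, ∀ x ∈ X, ∀ i, |G j x i| ≤ M) (hM0 : 0 ≤ M)
    (hcs : ∀ N, c N ∈ simplex n) (hr0 : ∀ N, 0 ≤ r N)
    (hc : Tendsto c atTop (𝓝 c₀)) (hr : Tendsto r atTop (𝓝 r₀))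
    (hdev : ∀ ε > 0, ∀ᶠ N in atTop, ∀ x ∈ solSet G h lam X c₀ r₀,
      infDist x (solSet G h lam X (c N) (r N)) ≤ ε)
    {τ : ℝ} (hτ : 0 < τ) (hfreq : ∃ᶠ N in atTop, ∃ x ∈ approxSolSet G h lam X (c N) (r N) ρ,
      τ ≤ infDist x (solSet G h lam X (c N) (r N))) :
    ∃ x ∈ approxSolSet G h lam X c₀ r₀ ρ, τ ≤ infDist x (solSet G h lam X c₀ r₀) := by
  -- `infDist x ∅ = 0`, so `le_infDist` below needs the limiting solution set to be nonempty.
  have hne : (solSet G h lam X c₀ r₀).Nonempty := by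
    have hfreq₀ : ∃ᶠ N in atTop, ∃ z ∈ approxSolSet G h lam X (c N) (r N) 0, True :=
      hfreq.mono fun N ⟨x, _, hτx⟩ => by
        obtain ⟨z, hz⟩ : (solSet G h lam X (c N) (r N)).Nonempty :=
          nonempty_iff_ne_empty.2 fun hS => by
            rw [hS, infDist_empty] at hτx
            linarith
        exact ⟨z, solSet_eq_approxSolSet_zero ▸ hz, trivial⟩
    obtain ⟨z, hz, -⟩ := exists_mem_approxSolSet_of_frequently hXc hG hh hMG hM0 hcs hr0 hc hr
      hfreq₀
    exact ⟨z, solSet_eq_approxSolSet_zero ▸ hz⟩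
  obtain ⟨x₀, hx₀, φ, hφ, x, hxτ, hx⟩ :=
    exists_mem_approxSolSet_of_frequently hXc hG hh hMG hM0 hcs hr0 hc hr hfreq
  refine ⟨x₀, hx₀, (le_infDist hne).2 fun x' hx' => le_of_forall_pos_le_add fun ε hε => ?_⟩
  have hk : ∀ᶠ k in atTop, τ ≤ dist (x k) x' + ε := by
    filter_upwards [hφ.tendsto_atTop.eventually (hdev ε hε)] with k hk
    linarith [hxτ k, hk x' hx', infDist_le_infDist_add_dist (x := x k) (y := x')
      (s := solSet G h lam X (c (φ k)) (r (φ k)))]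
  exact ge_of_tendsto ((hx.dist tendsto_const_nhds).add_const ε) hk

lemma psiSol_le_liminf (hXc : IsCompact X)
    (hG : ∀ j, ContinuousOn (G j) X) (hh : ∀ j, ContinuousOn (h j) X)
    (hMG : ∀ j, ∀ x ∈ X, ∀ i, |G j x i| ≤ M) (hM0 : 0 ≤ M)
    (hcs : ∀ N, c N ∈ simplex n) (hr0 : ∀ N, 0 ≤ r N)
    (hc : Tendsto c atTop (𝓝 c₀)) (hr : Tendsto r atTop (𝓝 r₀))
    (hdev : ∀ ε > 0, ∀ᶠ N in atTop, ∀ x ∈ solSet G h lam X c₀ r₀,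
      infDist x (solSet G h lam X (c N) (r N)) ≤ ε)
    {τ : ℝ} (hτ : 0 < τ) :
    psiSol G h lam X c₀ r₀ τ ≤ liminf (fun N => psiSol G h lam X (c N) (r N) τ) atTop := by
  refine le_of_forall_gt_imp_ge_of_dense fun b hb => ?_
  obtain ⟨ρ, -, hρ, hρb⟩ := ENNReal.lt_iff_exists_real_btwn.1 hb
  obtain ⟨x, hx, hτx⟩ := exists_mem_approxSolSet_le_infDist hXc hG hh hMG hM0 hcs hr0 hc hr hdev
    hτ ((frequently_lt_of_liminf_lt (h := hρ)).mono fun _ => exists_of_psiSol_lt)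
  exact (psiSol_le_ofReal hx hτx).trans hρb.le

end Cluster

def growthInv (f : ℝ → ℝ≥0∞) (b : ℝ≥0∞) : ℝ≥0∞ :=
  ⨆ τ ∈ {τ : ℝ | 0 ≤ τ ∧ f τ ≤ b}, ENNReal.ofReal τ

lemma limsup_growthInv_le {f : ℕ → ℝ → ℝ≥0∞} {g : ℝ → ℝ≥0∞} (hf : ∀ N, Monotone (f N))
    (hfg : ∀ τ, 0 < τ → g τ ≤ liminf (fun N => f N τ) atTop) (b : ℝ≥0∞) :
    limsup (fun N => growthInv (f N) b) atTop ≤ growthInv g b := by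
  refine le_of_forall_lt_imp_le_of_dense fun a ha => ?_
  obtain ⟨s, -, has, hs⟩ := ENNReal.lt_iff_exists_real_btwn.1 ha
  have hs0 : 0 < s := ENNReal.ofReal_pos.1 (zero_le.trans_lt has)
  have hfreq : ∃ᶠ N in atTop, f N s ≤ b := by
    refine (frequently_lt_of_lt_limsup (h := hs)).mono fun N hN => ?_
    obtain ⟨τ, ⟨-, hτb⟩, hsτ⟩ := lt_biSup_iff.1 hN
    exact (hf N (ENNReal.ofReal_lt_ofReal_iff'.1 hsτ).1.le).trans hτb
  exact has.le.trans (le_iSup₂_of_le (f := fun τ (_ : τ ∈ {τ : ℝ | 0 ≤ τ ∧ g τ ≤ b}) =>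
    ENNReal.ofReal τ) s ⟨hs0.le, (hfg s hs0).trans (liminf_le_of_frequently_le' hfreq)⟩ le_rfl)

lemma psiSolInv_eq_growthInv {c : Fin n → ℝ} {r t : ℝ} :
    psiSolInv G h lam X c r t = growthInv (psiSol G h lam X c r) (ENNReal.ofReal t) :=
  rfl

end BayesianDRVI

open BayesianDRVI

theorem psiSol_liminf_general {n d : ℕ} (hn : 1 ≤ n)
    (X : Set (Fin d → ℝ)) (hXne : X.Nonempty) (hXcomp : IsCompact X)
    (G : Fin n → (Fin d → ℝ) → Fin d → ℝ) (h : Fin n → (Fin d → ℝ) → ℝ)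
    (hGLip : ∀ j, ∃ LG : ℝ, ∀ x ∈ X, ∀ y ∈ X, ‖G j x - G j y‖ ≤ LG * ‖x - y‖)
    (hhLip : ∀ j, ∃ Lh : ℝ, ∀ x ∈ X, ∀ y ∈ X, |h j x - h j y| ≤ Lh * ‖x - y‖)
    (M : ℝ) (hM : ∀ j, ∀ x ∈ X, |h j x| ≤ M) (hMG : ∀ j, ∀ x ∈ X, ∀ i, |G j x i| ≤ M)
    (lam : ℝ) (hlam : 0 < lam)
    (θc : Fin n → ℝ) (hθc : θc ∈ simplex n) (rc : ℝ) (hrc : rc ∈ Set.Icc (0 : ℝ) 1)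
    (θN : ℕ → Fin n → ℝ) (hθN : ∀ N, θN N ∈ simplex n)
    (rN : ℕ → ℝ) (hrN : ∀ N, rN N ∈ Set.Icc (0 : ℝ) 1)
    (hθconv : Tendsto θN atTop (nhds θc)) (hrconv : Tendsto rN atTop (nhds rc))
    (p γ : ℝ) (hp : 1 ≤ p) (hγ : 0 < γ)
    (hgrowN : ∀ N : ℕ, ∀ x ∈ X, ∀ τ : ℝ, 0 ≤ τ →
      ENNReal.ofReal (γ * τ ^ p) ≤ psiLow h lam x (θN N) (rN N) τ)
    (hlocal : ∃ ε : ℝ, 0 < ε ∧ ∃ pbar : ℝ, 1 ≤ pbar ∧ ∃ γbar : ℝ, 0 < γbar ∧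
      ∃ τ0 : ℝ, 0 < τ0 ∧
        ∀ θ ∈ simplex n, ∀ r ∈ Set.Icc (0 : ℝ) 1, ‖θ - θc‖ < ε → |r - rc| < ε →
          ∀ τ ∈ Set.Icc (0 : ℝ) τ0,
            ENNReal.ofReal (γbar * τ ^ pbar) ≤ psiSol G h lam X θ r τ) :
    (∀ τ : ℝ, 0 < τ →
      psiSol G h lam X θc rc τ
        ≤ Filter.liminf (fun N => psiSol G h lam X (θN N) (rN N) τ) atTop) ∧
    (∀ t : ℝ, 0 < t →
      Filter.limsup (fun N => psiSolInv G h lam X (θN N) (rN N) t) atTop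
        ≤ psiSolInv G h lam X θc rc t) := by
  obtain ⟨x₀, hx₀⟩ := hXne
  have hM0 : 0 ≤ M := (abs_nonneg _).trans (hM ⟨0, hn⟩ x₀ hx₀)
  have hG j : ContinuousOn (G j) X := continuousOn_of_norm_sub_le (hGLip j)
  have hh j : ContinuousOn (h j) X :=
    continuousOn_of_norm_sub_le (by simpa only [Real.norm_eq_abs] using hhLip j)
  obtain ⟨ε, hε, pbar, hpbar, γbar, hγbar, τ0, hτ0, hloc⟩ := hlocal
  have hgrowSol : ∀ᶠ N in atTop, ∀ τ ∈ Icc (0 : ℝ) τ0,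
      ENNReal.ofReal (γbar * τ ^ pbar) ≤ psiSol G h lam X (θN N) (rN N) τ := by
    filter_upwards [(tendsto_iff_norm_sub_tendsto_zero.1 hθconv).eventually (gt_mem_nhds hε),
      (tendsto_iff_norm_sub_tendsto_zero.1 hrconv).eventually (gt_mem_nhds hε)] with N hθ hr
    exact hloc _ (hθN N) _ (hrN N) hθ (by simpa only [Real.norm_eq_abs] using hr)
  have hdev (ε' : ℝ) (hε' : 0 < ε') := eventually_infDist_solSet_le hM hMG hM0 hlam.le hγ
    (by linarith) hγbar (by linarith) hτ0 hθc hrc.1 hθN (fun N => (hrN N).1) hθconv hrconv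
    hgrowN hgrowSol hε'
  have hlsc (τ : ℝ) (hτ : 0 < τ) := psiSol_le_liminf hXcomp hG hh hMG hM0 hθN
    (fun N => (hrN N).1) hθconv hrconv hdev hτ
  refine ⟨hlsc, fun t _ => ?_⟩
  simp only [psiSolInv_eq_growthInv]
  exact limsup_growthInv_le (fun _ => monotone_psiSol) hlsc _

/-- Lemma 4.9 (deterministic form): lower semicontinuity of the solution-set growth
function and upper semicontinuity of its generalized inverse along converging
parameter sequences. -/
theorem psiSol_liminf {n d : ℕ} (hn : 1 ≤ n) (hd : 1 ≤ d)
    (X : Set (Fin d → ℝ)) (hXne : X.Nonempty) (hXcomp : IsCompact X) (hXconv : Convex ℝ X)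
    (G : Fin n → (Fin d → ℝ) → Fin d → ℝ) (h : Fin n → (Fin d → ℝ) → ℝ)
    (hGLip : ∀ j, ∃ LG : ℝ, ∀ x ∈ X, ∀ y ∈ X, ‖G j x - G j y‖ ≤ LG * ‖x - y‖)
    (hhLip : ∀ j, ∃ Lh : ℝ, ∀ x ∈ X, ∀ y ∈ X, |h j x - h j y| ≤ Lh * ‖x - y‖)
    (M : ℝ) (hM : ∀ j, ∀ x ∈ X, |h j x| ≤ M) (hMG : ∀ j, ∀ x ∈ X, ∀ i, |G j x i| ≤ M)
    (lam : ℝ) (hlam : 0 < lam)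
    (θc : Fin n → ℝ) (hθc : θc ∈ simplex n) (rc : ℝ) (hrc : rc ∈ Set.Icc (0 : ℝ) 1)
    (θN : ℕ → Fin n → ℝ) (hθN : ∀ N, θN N ∈ simplex n)
    (rN : ℕ → ℝ) (hrN : ∀ N, rN N ∈ Set.Icc (0 : ℝ) 1)
    (hθconv : Tendsto θN atTop (nhds θc)) (hrconv : Tendsto rN atTop (nhds rc))
    (p γ : ℝ) (hp : 1 ≤ p) (hγ : 0 < γ)
    (hgrowc : ∀ x ∈ X, ∀ τ : ℝ, 0 ≤ τ →
      ENNReal.ofReal (γ * τ ^ p) ≤ psiLow h lam x θc rc τ)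
    (hgrowN : ∀ N : ℕ, ∀ x ∈ X, ∀ τ : ℝ, 0 ≤ τ →
      ENNReal.ofReal (γ * τ ^ p) ≤ psiLow h lam x (θN N) (rN N) τ)
    (hlocal : ∃ ε : ℝ, 0 < ε ∧ ∃ pbar : ℝ, 1 ≤ pbar ∧ ∃ γbar : ℝ, 0 < γbar ∧
      ∃ τ0 : ℝ, 0 < τ0 ∧
        ∀ θ ∈ simplex n, ∀ r ∈ Set.Icc (0 : ℝ) 1, ‖θ - θc‖ < ε → |r - rc| < ε →
          ∀ τ ∈ Set.Icc (0 : ℝ) τ0,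
            ENNReal.ofReal (γbar * τ ^ pbar) ≤ psiSol G h lam X θ r τ) :
    (∀ τ : ℝ, 0 < τ →
      psiSol G h lam X θc rc τ
        ≤ Filter.liminf (fun N => psiSol G h lam X (θN N) (rN N) τ) atTop) ∧
    (∀ t : ℝ, 0 < t →
      Filter.limsup (fun N => psiSolInv G h lam X (θN N) (rN N) t) atTop
        ≤ psiSolInv G h lam X θc rc t) :=
  psiSol_liminf_general hn X hXne hXcomp G h hGLip hhLip M hM hMG lam hlam θc hθc rc hrc θN hθN rN
    hrN hθconv hrconv p γ hp hγ hgrowN hlocal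
end
end
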